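/- Let M = 1, ξ⁰_1 ≥ … ≥ ξ⁰_N and ξ̄(0) > 0. Set t_1 = 0 and, for l = 2,…,N, t_l = (N/(N−1)) ln( (l−1)((N−1)/N)(ξ̄_{1,l−1}(0) − ξ⁰_l)/ξ̄(0) + 1 ), where ξ̄_{1,l}(t) = (1/l) ∑_{i=1}^l ξ_i(t). If T ∈ [t_l, t_{l+1}) for some l ∈ {1,…,N−1}, then every full-strength control α whose trajectory satisfies ξ_i(T) = ξ̄_{1,l}(T) for all i ∈ {1,…,l}, with ∑_{i=1}^l α_i(t) = 1 for almost every t and α_i ≡ 0 for all i ∈ {l+1,…,N}, minimizes 𝕍(T) among all full-strength controls with the same initial state. If T ≥ t_N, then every full-strength control whose trajectory satisfies ξ_i(T) = ξ̄(T) for all i ∈ {1,…,N} minimizes 𝕍(T) among all full-strength controls with the same initial state. -/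

import Mathlib

open MeasureTheory Real

noncomputable section

/-- An admissible control: measurable, valued in `[0,1]` on `[0,T]` for the agents `1,…,N`,
with total strength at most `M` at every time of `[0,T]`. -/
def IsAdmissible (N : ℕ) (T M : ℝ) (α : ℝ → ℕ → ℝ) : Prop :=
  (∀ i, Measurable fun t => α t i) ∧
  (∀ t ∈ Set.Icc (0 : ℝ) T, ∀ i ∈ Finset.Icc 1 N, 0 ≤ α t i ∧ α t i ≤ 1) ∧
  (∀ t ∈ Set.Icc (0 : ℝ) T, ∑ i ∈ Finset.Icc 1 N, α t i ≤ M)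

/-- A full-strength control: admissible with total strength exactly `1` at every time. -/
def IsFullStrength (N : ℕ) (T : ℝ) (α : ℝ → ℕ → ℝ) : Prop :=
  IsAdmissible N T 1 α ∧ ∀ t ∈ Set.Icc (0 : ℝ) T, ∑ i ∈ Finset.Icc 1 N, α t i = 1

/-- The mean `ξ̄(s) = (1/N) ∑_{j=1}^N ξ_j(s)` of the state. -/
def xbar (N : ℕ) (ξ : ℝ → ℕ → ℝ) (s : ℝ) : ℝ :=
  (N : ℝ)⁻¹ * ∑ j ∈ Finset.Icc 1 N, ξ s j

/-- The trajectory of a control `α` with initial state `ξ0`. -/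
def IsTrajectory (N : ℕ) (T : ℝ) (α : ℝ → ℕ → ℝ) (ξ0 : ℕ → ℝ) (ξ : ℝ → ℕ → ℝ) : Prop :=
  (∀ i, ContinuousOn (fun t => ξ t i) (Set.Icc 0 T)) ∧
  (∀ t ∈ Set.Icc (0 : ℝ) T, ∀ i ∈ Finset.Icc 1 N,
    ξ t i = ξ0 i + ∫ s in (0 : ℝ)..t, (-(ξ s i) + (1 - α s i) * xbar N ξ s))

/-- The migration functional `𝕍(t) = (1/N) ∑_{i=1}^N ξ_i(t)²`. -/
def migV (N : ℕ) (ξ : ℝ → ℕ → ℝ) (t : ℝ) : ℝ :=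
  (N : ℝ)⁻¹ * ∑ i ∈ Finset.Icc 1 N, (ξ t i) ^ 2

/-- The partial mean `ξ̄_{1,l}(t) = (1/l) ∑_{i=1}^l ξ_i(t)`. -/
def pmean (l : ℕ) (ξ : ℝ → ℕ → ℝ) (t : ℝ) : ℝ :=
  (l : ℝ)⁻¹ * ∑ i ∈ Finset.Icc 1 l, ξ t i

/-- The partial mean `(1/l) ∑_{i=1}^l ξ⁰_i` of the initial state. -/
def pmean0 (l : ℕ) (ξ0 : ℕ → ℝ) : ℝ :=
  (l : ℝ)⁻¹ * ∑ i ∈ Finset.Icc 1 l, ξ0 i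

/-- `α` (with trajectory `ξ`) is optimal for the final cost `𝕍(T)` among admissible
controls with the same initial state. -/
def IsOptimalFinal (N : ℕ) (T M : ℝ) (ξ0 : ℕ → ℝ) (α ξ : ℝ → ℕ → ℝ) : Prop :=
  IsAdmissible N T M α ∧ IsTrajectory N T α ξ0 ξ ∧
  ∀ β η, IsAdmissible N T M β → IsTrajectory N T β ξ0 η → migV N ξ T ≤ migV N η T

/-!
For a full-strength control the drifts sum to `-ξ̄`, so `ξ̄(t) = e^{-t/N} ξ̄(0)` whatever the
control. With the integrating factor `e^t` every agent then ends at
`e^T ξ_i(T) = d_i - ξ̄(0) u_i`, where `d_i = ξ⁰_i + ξ̄(0) A` with `A = ∫_0^T e^{(1-1/N)s} ds` does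
not depend on the control, and the weighted efforts `u_i = ∫_0^T e^{(1-1/N)s} α_i(s) ds` are
nonnegative with sum `A`. Minimising `𝕍(T)` is thus a water-filling problem: the optimum lowers
the first agents to a common level `m` and leaves alone those with `d_i ≤ m`. For the control of
the statement `m = ξ̄_{1,l}(0) + (1 - 1/l) ξ̄(0) A`, and `T < t_{l+1}` says exactly `d_{l+1} ≤ m`.
-/

open Set

/-- Since `g` is only integrable, `f` is merely absolutely continuous: the product rule for
`e^{a t} f t` holds almost everywhere, which is enough for the fundamental theorem of calculus
for absolutely continuous functions. -/
theorem exp_mul_eq_add_integral_of_eq_integral {a c T : ℝ} {f g : ℝ → ℝ} (hT : 0 ≤ T)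
    (hf : ContinuousOn f (Icc 0 T)) (hg : IntervalIntegrable g volume 0 T)
    (heq : ∀ t ∈ Icc 0 T, f t = c + ∫ s in 0..t, (-(a * f s) + g s)) :
    exp (a * T) * f T = c + ∫ s in 0..T, exp (a * s) * g s := by
  have hIcc : uIcc 0 T = Icc 0 T := uIcc_of_le hT
  have hh : IntervalIntegrable (fun s => -(a * f s) + g s) volume 0 T :=
    ((hf.const_mul a).neg.intervalIntegrable_of_Icc hT).add hg
  set F := fun t => c + ∫ s in 0..t, (-(a * f s) + g s) with hF
  have hfF : EqOn f F (Icc 0 T) := heq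
  have hF_ac : AbsolutelyContinuousOnInterval F 0 T :=
    (contDiffOn_const (c := c)).absolutelyContinuousOnInterval.fun_add
      (hh.absolutelyContinuousOnInterval_intervalIntegral (by simp [hT]))
  have hE_ac : AbsolutelyContinuousOnInterval (fun t => exp (a * t)) 0 T :=
    (by fun_prop : ContDiff ℝ 1 fun t => exp (a * t)).contDiffOn.absolutelyContinuousOnInterval
  have hderiv : ∀ᵐ s, s ∈ uIoc 0 T →
      deriv (fun t => exp (a * t) * F t) s = exp (a * s) * g s := by
    filter_upwards [hh.ae_hasDerivAt_integral] with s hs hsI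
    have hsI' : s ∈ uIcc 0 T := uIoc_subset_uIcc hsI
    have hd : HasDerivAt (fun t => exp (a * t) * F t)
        (exp (a * s) * a * F s + exp (a * s) * (-(a * f s) + g s)) s := by
      simpa using (((hasDerivAt_id s).const_mul a).exp).fun_mul
        ((hs hsI' 0 (by simp)).const_add c)
    rw [hd.deriv, ← hfF (hIcc ▸ hsI')]
    ring
  have hftc := (hE_ac.fun_mul hF_ac).integral_deriv_eq_sub
  rw [intervalIntegral.integral_congr_ae hderiv] at hftc
  rw [hfF ⟨hT, le_rfl⟩, hftc]
  simp [hF]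

theorem sum_sq_sub_le_of_waterFilling {ι : Type*} (s : Finset ι) (d v w : ι → ℝ) (m : ℝ)
    (hsum : ∑ i ∈ s, v i = ∑ i ∈ s, w i) (hv : ∀ i ∈ s, 0 ≤ v i)
    (hw : ∀ i ∈ s, d i - w i = m ∨ (w i = 0 ∧ d i ≤ m)) :
    ∑ i ∈ s, (d i - w i) ^ 2 ≤ ∑ i ∈ s, (d i - v i) ^ 2 := by
  have hcross : ∀ i ∈ s, (w i - v i) * m ≤ (w i - v i) * (d i - w i) := by
    intro i hi
    rcases hw i hi with hm | ⟨hw0, hdm⟩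
    · rw [hm]
    · rw [hw0]
      nlinarith [hv i hi]
  have hbalance : ∑ i ∈ s, (w i - v i) * m = 0 := by
    rw [← Finset.sum_mul, Finset.sum_sub_distrib, hsum, sub_self, zero_mul]
  calc ∑ i ∈ s, (d i - w i) ^ 2 = ∑ i ∈ s, ((d i - w i) ^ 2 + 2 * ((w i - v i) * m)) := by
        rw [Finset.sum_add_distrib, ← Finset.mul_sum, hbalance, mul_zero, add_zero]
    _ ≤ ∑ i ∈ s, (d i - v i) ^ 2 :=
        Finset.sum_le_sum fun i hi => by nlinarith [hcross i hi, sq_nonneg (w i - v i)]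

theorem mul_integral_exp_le_of_lt_log {n k P p T : ℝ} (hn : 1 < n) (hk : 0 ≤ k) (hP : 0 ≤ P)
    (hp : 0 < p) (hT : T < n / (n - 1) * log (k * ((n - 1) / n) * (P / p) + 1)) :
    p * ∫ s in 0..T, exp ((1 - n⁻¹) * s) ≤ k * P := by
  have hn0 : 0 < n := one_pos.trans hn
  have hrate : 1 - n⁻¹ = (n - 1) / n := by field_simp
  have hrate_pos : 0 < (n - 1) / n := div_pos (sub_pos.2 hn) hn0
  have hlog : (n - 1) / n * T < log (k * ((n - 1) / n) * (P / p) + 1) := by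
    rwa [← inv_div, lt_inv_mul_iff₀ hrate_pos] at hT
  have hexp : exp ((n - 1) / n * T) < k * ((n - 1) / n) * (P / p) + 1 :=
    (lt_log_iff_exp_lt (by positivity)).1 hlog
  have hint : (n - 1) / n * ∫ s in 0..T, exp ((n - 1) / n * s) = exp ((n - 1) / n * T) - 1 := by
    rw [intervalIntegral.mul_integral_comp_mul_left, integral_exp, mul_zero, exp_zero]
  rw [hrate]
  refine le_of_mul_le_mul_left ?_ hrate_pos
  rw [mul_left_comm, hint]
  have := mul_lt_mul_of_pos_left hexp hp
  field_simp at this ⊢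
  linarith

theorem le_pmean0 {l : ℕ} {c : ℝ} {ξ0 : ℕ → ℝ} (hl : l ≠ 0)
    (h : ∀ i ∈ Finset.Icc 1 l, c ≤ ξ0 i) : c ≤ pmean0 l ξ0 := by
  have hsum := Finset.card_nsmul_le_sum _ _ c h
  rw [Nat.card_Icc, add_tsub_cancel_right, nsmul_eq_mul] at hsum
  rw [pmean0, le_inv_mul_iff₀ (by positivity)]
  exact hsum

def weightedEffort (N : ℕ) (T : ℝ) (β : ℝ → ℕ → ℝ) (i : ℕ) : ℝ :=
  ∫ s in 0..T, exp ((1 - (N : ℝ)⁻¹) * s) * β s i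

section Trajectory

variable {N : ℕ} {T M : ℝ} {ξ0 : ℕ → ℝ} {β η : ℝ → ℕ → ℝ} {i : ℕ}

theorem IsAdmissible.intervalIntegrable (hβ : IsAdmissible N T M β) (hT : 0 ≤ T)
    (hi : i ∈ Finset.Icc 1 N) : IntervalIntegrable (fun s => β s i) volume 0 T := by
  rw [intervalIntegrable_iff_integrableOn_Icc_of_le hT]
  refine Measure.integrableOn_of_bounded (M := 1) measure_Icc_lt_top.ne
    (hβ.1 i).aestronglyMeasurable ?_
  filter_upwards [ae_restrict_mem measurableSet_Icc] with s hs
  obtain ⟨h0, h1⟩ := hβ.2.1 s hs i hi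
  rwa [Real.norm_eq_abs, abs_of_nonneg h0]

theorem IsAdmissible.mono (hβ : IsAdmissible N T M β) {t : ℝ} (ht : t ≤ T) :
    IsAdmissible N t M β :=
  ⟨hβ.1, fun s hs => hβ.2.1 s ⟨hs.1, hs.2.trans ht⟩, fun s hs => hβ.2.2 s ⟨hs.1, hs.2.trans ht⟩⟩

theorem IsFullStrength.mono (hβ : IsFullStrength N T β) {t : ℝ} (ht : t ≤ T) :
    IsFullStrength N t β :=
  ⟨hβ.1.mono ht, fun s hs => hβ.2 s ⟨hs.1, hs.2.trans ht⟩⟩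

theorem IsTrajectory.mono (hη : IsTrajectory N T β ξ0 η) {t : ℝ} (ht : t ≤ T) :
    IsTrajectory N t β ξ0 η :=
  ⟨fun i => (hη.1 i).mono (Icc_subset_Icc_right ht), fun s hs => hη.2 s ⟨hs.1, hs.2.trans ht⟩⟩

theorem weightedEffort_nonneg (hβ : IsAdmissible N T M β) (hT : 0 ≤ T)
    (hi : i ∈ Finset.Icc 1 N) : 0 ≤ weightedEffort N T β i :=
  intervalIntegral.integral_nonneg hT fun s hs => mul_nonneg (exp_pos _).le (hβ.2.1 s hs i hi).1

theorem weightedEffort_eq_zero_of_ae (hT : 0 ≤ T) (h : ∀ᵐ s, s ∈ Icc 0 T → β s i = 0) :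
    weightedEffort N T β i = 0 := by
  rw [weightedEffort, intervalIntegral.integral_of_le hT]
  refine integral_eq_zero_of_ae ?_
  rw [Filter.EventuallyEq, ae_restrict_iff' measurableSet_Ioc]
  filter_upwards [h] with s hs hsI
  simp [hs (Ioc_subset_Icc_self hsI)]

theorem IsFullStrength.sum_weightedEffort (hβ : IsFullStrength N T β) (hT : 0 ≤ T) :
    ∑ i ∈ Finset.Icc 1 N, weightedEffort N T β i = ∫ s in 0..T, exp ((1 - (N : ℝ)⁻¹) * s) := by
  unfold weightedEffort
  rw [← intervalIntegral.integral_finsetSum fun i hi =>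
    (hβ.1.intervalIntegrable hT hi).continuousOn_mul (by fun_prop)]
  refine intervalIntegral.integral_congr fun s hs => ?_
  rw [uIcc_of_le hT] at hs
  simp only [← Finset.mul_sum, hβ.2 s hs, mul_one]

theorem IsTrajectory.continuousOn_xbar (hη : IsTrajectory N T β ξ0 η) :
    ContinuousOn (xbar N η) (Icc 0 T) :=
  continuousOn_const.mul (continuousOn_finsetSum _ fun i _ => hη.1 i)

theorem IsTrajectory.intervalIntegrable_control_mul_xbar (hβ : IsAdmissible N T M β)
    (hη : IsTrajectory N T β ξ0 η) (hT : 0 ≤ T) (hi : i ∈ Finset.Icc 1 N) :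
    IntervalIntegrable (fun s => (1 - β s i) * xbar N η s) volume 0 T :=
  (intervalIntegrable_const.sub (hβ.intervalIntegrable hT hi)).mul_continuousOn
    (by rw [uIcc_of_le hT]; exact hη.continuousOn_xbar)

theorem IsFullStrength.sum_drift (hβ : IsFullStrength N T β) {s : ℝ} (hs : s ∈ Icc 0 T) :
    ∑ i ∈ Finset.Icc 1 N, (-(η s i) + (1 - β s i) * xbar N η s) = -xbar N η s := by
  have hN : (N : ℝ) ≠ 0 := by
    rintro hN
    simpa [Nat.cast_eq_zero.1 hN] using hβ.2 s hs
  have hsum : ∑ i ∈ Finset.Icc 1 N, η s i = N * xbar N η s := by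
    rw [xbar, mul_inv_cancel_left₀ hN]
  rw [Finset.sum_add_distrib, Finset.sum_neg_distrib, ← Finset.sum_mul, Finset.sum_sub_distrib,
    hβ.2 s hs, Finset.sum_const, Nat.card_Icc, add_tsub_cancel_right, nsmul_eq_mul, mul_one, hsum]
  ring

theorem IsTrajectory.xbar_eq_add_integral (hβ : IsFullStrength N T β)
    (hη : IsTrajectory N T β ξ0 η) (hT : 0 ≤ T) :
    xbar N η T = pmean0 N ξ0 + ∫ s in 0..T, -((N : ℝ)⁻¹ * xbar N η s) := by
  have hint : ∀ i ∈ Finset.Icc 1 N,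
      IntervalIntegrable (fun s => -(η s i) + (1 - β s i) * xbar N η s) volume 0 T :=
    fun i hi => ((hη.1 i).neg.intervalIntegrable_of_Icc hT).add
      (hη.intervalIntegrable_control_mul_xbar hβ.1 hT hi)
  calc xbar N η T
      = (N : ℝ)⁻¹ * ∑ i ∈ Finset.Icc 1 N,
          (ξ0 i + ∫ s in 0..T, (-(η s i) + (1 - β s i) * xbar N η s)) :=
        congrArg _ (Finset.sum_congr rfl fun i hi => hη.2 T ⟨hT, le_rfl⟩ i hi)
    _ = pmean0 N ξ0 + (N : ℝ)⁻¹ * ∫ s in 0..T, ∑ i ∈ Finset.Icc 1 N,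
          (-(η s i) + (1 - β s i) * xbar N η s) := by
        rw [Finset.sum_add_distrib, intervalIntegral.integral_finsetSum hint, mul_add, pmean0]
    _ = pmean0 N ξ0 + ∫ s in 0..T, -((N : ℝ)⁻¹ * xbar N η s) := by
        rw [← intervalIntegral.integral_const_mul]
        refine congrArg _ (intervalIntegral.integral_congr fun s hs => ?_)
        rw [uIcc_of_le hT] at hs
        rw [hβ.sum_drift hs, mul_neg]

theorem IsTrajectory.xbar_eq (hβ : IsFullStrength N T β) (hη : IsTrajectory N T β ξ0 η)
    {t : ℝ} (ht : t ∈ Icc 0 T) : xbar N η t = exp (-((N : ℝ)⁻¹ * t)) * pmean0 N ξ0 := by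
  have h := exp_mul_eq_add_integral_of_eq_integral (g := fun _ => 0) ht.1
    (hη.continuousOn_xbar.mono (Icc_subset_Icc_right ht.2)) intervalIntegrable_const
    fun u hu => by
      simpa only [add_zero] using
        (hη.mono (hu.2.trans ht.2)).xbar_eq_add_integral (hβ.mono (hu.2.trans ht.2)) hu.1
  simp only [mul_zero, intervalIntegral.integral_zero, add_zero] at h
  rw [← h, ← mul_assoc, ← exp_add, neg_add_cancel, exp_zero, one_mul]

theorem IsTrajectory.exp_mul_apply (hβ : IsFullStrength N T β) (hη : IsTrajectory N T β ξ0 η)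
    (hT : 0 ≤ T) (hi : i ∈ Finset.Icc 1 N) :
    exp T * η T i = ξ0 i + pmean0 N ξ0 *
      ((∫ s in 0..T, exp ((1 - (N : ℝ)⁻¹) * s)) - weightedEffort N T β i) := by
  have h := exp_mul_eq_add_integral_of_eq_integral (a := 1) (f := fun t => η t i) hT (hη.1 i)
    (hη.intervalIntegrable_control_mul_xbar hβ.1 hT hi)
    (fun t ht => by simpa only [one_mul] using hη.2 t ht i hi)
  rw [one_mul] at h
  have hexp : Continuous fun s => exp ((1 - (N : ℝ)⁻¹) * s) := by fun_prop
  rw [h, weightedEffort, ← intervalIntegral.integral_sub (hexp.intervalIntegrable 0 T)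
    ((hβ.1.intervalIntegrable hT hi).continuousOn_mul hexp.continuousOn),
    ← intervalIntegral.integral_const_mul]
  refine congrArg _ (intervalIntegral.integral_congr fun s hs => ?_)
  rw [uIcc_of_le hT] at hs
  simp only [one_mul, hη.xbar_eq hβ hs, show (1 - (N : ℝ)⁻¹) * s = s + -((N : ℝ)⁻¹ * s) by ring,
    exp_add]
  ring

end Trajectory

section Comparison

variable {N l : ℕ} {T : ℝ} {ξ0 : ℕ → ℝ} {α ξ β η : ℝ → ℕ → ℝ}

theorem exp_mul_pmean_eq (hl : l ≠ 0) (hlN : l ≤ N) (hT : 0 ≤ T)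
    (hα : IsFullStrength N T α) (hξ : IsTrajectory N T α ξ0 ξ)
    (hidle : ∀ i ∈ Finset.Icc (l + 1) N, weightedEffort N T α i = 0) :
    exp T * pmean l ξ T = pmean0 l ξ0 +
      (1 - (l : ℝ)⁻¹) * (pmean0 N ξ0 * ∫ s in 0..T, exp ((1 - (N : ℝ)⁻¹) * s)) := by
  have hsub : Finset.Icc 1 l ⊆ Finset.Icc 1 N := Finset.Icc_subset_Icc_right hlN
  have hactive : ∑ i ∈ Finset.Icc 1 l, weightedEffort N T α i =
      ∫ s in 0..T, exp ((1 - (N : ℝ)⁻¹) * s) := by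
    rw [← hα.sum_weightedEffort hT]
    refine Finset.sum_subset hsub fun i hiN hil => hidle i ?_
    simp only [Finset.mem_Icc, not_and, not_le] at hiN hil ⊢
    omega
  rw [pmean, pmean0, mul_left_comm, Finset.mul_sum,
    Finset.sum_congr rfl fun i hi => hξ.exp_mul_apply hα hT (hsub hi), Finset.sum_add_distrib,
    ← Finset.mul_sum, Finset.sum_sub_distrib, hactive, Finset.sum_const, Nat.card_Icc,
    add_tsub_cancel_right, nsmul_eq_mul]
  field_simp

theorem migV_le_of_gathered (hT : 0 ≤ T) (hbar : 0 ≤ pmean0 N ξ0)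
    (hα : IsFullStrength N T α) (hξ : IsTrajectory N T α ξ0 ξ)
    (hgather : ∀ i ∈ Finset.Icc 1 l, ξ T i = pmean l ξ T)
    (hidle : ∀ i ∈ Finset.Icc (l + 1) N, weightedEffort N T α i = 0)
    (hfar : ∀ i ∈ Finset.Icc (l + 1) N,
      ξ0 i + pmean0 N ξ0 * ∫ s in 0..T, exp ((1 - (N : ℝ)⁻¹) * s) ≤ exp T * pmean l ξ T)
    (hβ : IsFullStrength N T β) (hη : IsTrajectory N T β ξ0 η) :
    migV N ξ T ≤ migV N η T := by
  set A := ∫ s in 0..T, exp ((1 - (N : ℝ)⁻¹) * s)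
  set p := pmean0 N ξ0
  have hscale : ∀ ζ : ℝ → ℕ → ℝ,
      exp T ^ 2 * migV N ζ T = (N : ℝ)⁻¹ * ∑ i ∈ Finset.Icc 1 N, (exp T * ζ T i) ^ 2 := by
    intro ζ
    simp only [migV, mul_pow, ← Finset.mul_sum]
    ring
  have hcost : ∀ {γ ζ : ℝ → ℕ → ℝ}, IsFullStrength N T γ → IsTrajectory N T γ ξ0 ζ →
      ∑ i ∈ Finset.Icc 1 N, (exp T * ζ T i) ^ 2 =
        ∑ i ∈ Finset.Icc 1 N, ((ξ0 i + p * A) - p * weightedEffort N T γ i) ^ 2 :=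
    fun hγ hζ => Finset.sum_congr rfl fun i hi => by rw [hζ.exp_mul_apply hγ hT hi]; ring
  have hlevel : ∀ i ∈ Finset.Icc 1 N,
      (ξ0 i + p * A) - p * weightedEffort N T α i = exp T * pmean l ξ T ∨
        (p * weightedEffort N T α i = 0 ∧ ξ0 i + p * A ≤ exp T * pmean l ξ T) := by
    intro i hi
    rcases le_or_gt i l with hil | hli
    · left
      rw [← hgather i (Finset.mem_Icc.2 ⟨(Finset.mem_Icc.1 hi).1, hil⟩),
        hξ.exp_mul_apply hα hT hi]
      ring
    · have hi' : i ∈ Finset.Icc (l + 1) N := Finset.mem_Icc.2 ⟨hli, (Finset.mem_Icc.1 hi).2⟩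
      exact Or.inr ⟨by rw [hidle i hi', mul_zero], hfar i hi'⟩
  have hwater := sum_sq_sub_le_of_waterFilling (Finset.Icc 1 N) (fun i => ξ0 i + p * A)
    (fun i => p * weightedEffort N T β i) (fun i => p * weightedEffort N T α i)
    (exp T * pmean l ξ T)
    (by simp only [← Finset.mul_sum, hα.sum_weightedEffort hT, hβ.sum_weightedEffort hT])
    (fun i hi => mul_nonneg hbar (weightedEffort_nonneg hβ.1 hT hi)) hlevel
  refine le_of_mul_le_mul_left ?_ (by positivity : 0 < exp T ^ 2)
  rw [hscale, hscale, hcost hα hξ, hcost hβ hη]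
  exact mul_le_mul_of_nonneg_left hwater (by positivity)

end Comparison

theorem full_control_strategy_final_cost_general
    (N : ℕ) (hN : 2 ≤ N) (T : ℝ) (hT : 0 < T) (ξ0 : ℕ → ℝ)
    (hord : ∀ i ∈ Finset.Icc 1 N, ∀ j ∈ Finset.Icc 1 N, i ≤ j → ξ0 j ≤ ξ0 i)
    (hbar : 0 < pmean0 N ξ0)
    (tl : ℕ → ℝ)
    (htl : ∀ l : ℕ, 2 ≤ l → l ≤ N → tl l =
      ((N : ℝ) / ((N : ℝ) - 1)) *
        Real.log (((l : ℝ) - 1) * (((N : ℝ) - 1) / (N : ℝ)) *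
          ((pmean0 (l - 1) ξ0 - ξ0 l) / pmean0 N ξ0) + 1)) :
    (∀ l ∈ Finset.Icc 1 (N - 1), tl l ≤ T → T < tl (l + 1) →
      ∀ α ξ, IsFullStrength N T α → IsTrajectory N T α ξ0 ξ →
        (∀ i ∈ Finset.Icc 1 l, ξ T i = pmean l ξ T) →
        (∀ᵐ t ∂volume, t ∈ Set.Icc (0 : ℝ) T → ∑ i ∈ Finset.Icc 1 l, α t i = 1) →
        (∀ᵐ t ∂volume, t ∈ Set.Icc (0 : ℝ) T → ∀ i ∈ Finset.Icc (l + 1) N, α t i = 0) →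
        ∀ β η, IsFullStrength N T β → IsTrajectory N T β ξ0 η →
          migV N ξ T ≤ migV N η T) ∧
    (tl N ≤ T →
      ∀ α ξ, IsFullStrength N T α → IsTrajectory N T α ξ0 ξ →
        (∀ i ∈ Finset.Icc 1 N, ξ T i = xbar N ξ T) →
        ∀ β η, IsFullStrength N T β → IsTrajectory N T β ξ0 η →
          migV N ξ T ≤ migV N η T) := by
  refine ⟨fun l hl _ hTlt α ξ hα hξ hgather _ hidle β η hβ hη => ?_,
    fun _ α ξ hα hξ hgather β η hβ hη => migV_le_of_gathered hT.le hbar.le hα hξ hgather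
      (fun i hi => by simp only [Finset.mem_Icc] at hi; omega)
      (fun i hi => by simp only [Finset.mem_Icc] at hi; omega) hβ hη⟩
  obtain ⟨hl1, hlN⟩ := Finset.mem_Icc.1 hl
  have hidle' : ∀ i ∈ Finset.Icc (l + 1) N, weightedEffort N T α i = 0 := fun i hi =>
    weightedEffort_eq_zero_of_ae hT.le (by filter_upwards [hidle] with t ht hmem using ht hmem i hi)
  have hnext : l + 1 ∈ Finset.Icc 1 N := Finset.mem_Icc.2 ⟨by omega, by omega⟩
  have hgap : ξ0 (l + 1) ≤ pmean0 l ξ0 := le_pmean0 (by omega) fun i hi =>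
    hord i (Finset.Icc_subset_Icc_right (by omega) hi) (l + 1) hnext
      (by simp only [Finset.mem_Icc] at hi; omega)
  rw [htl (l + 1) (by omega) (by omega), Nat.cast_add, Nat.cast_one, add_sub_cancel_right,
    Nat.add_sub_cancel] at hTlt
  have hbudget := mul_integral_exp_le_of_lt_log (by exact_mod_cast hN) (Nat.cast_nonneg l)
    (sub_nonneg.2 hgap) hbar hTlt
  refine migV_le_of_gathered hT.le hbar.le hα hξ hgather hidle' (fun i hi => ?_) hβ hη
  have hfar := hord (l + 1) hnext i (Finset.Icc_subset_Icc_left (by omega) hi)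
    (Finset.mem_Icc.1 hi).1
  rw [exp_mul_pmean_eq (by omega) (by omega) hT.le hα hξ hidle']
  have hl0 : (0 : ℝ) < l := by exact_mod_cast hl1
  have hshare : (l : ℝ)⁻¹ * (pmean0 N ξ0 * ∫ s in 0..T, exp ((1 - (N : ℝ)⁻¹) * s)) ≤
      pmean0 l ξ0 - ξ0 (l + 1) := by
    rwa [inv_mul_le_iff₀ hl0]
  linarith

/-- Optimal full-strength strategy for the final cost (`M = 1`): with the switching times
`t_1 = 0`, `t_l = (N/(N−1)) ln((l−1)((N−1)/N)(ξ̄_{1,l−1}(0) − ξ⁰_l)/ξ̄(0) + 1)`, if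
`T ∈ [t_l, t_{l+1})` then any full-strength control gathering the first `l` agents at their
partial mean at time `T`, using all its strength on them and none on the others, is optimal
among full-strength controls; if `T ≥ t_N`, any full-strength control achieving consensus
`ξ_i(T) = ξ̄(T)` is optimal among full-strength controls. -/
theorem full_control_strategy_final_cost
    (N : ℕ) (hN : 2 ≤ N) (T : ℝ) (hT : 0 < T) (ξ0 : ℕ → ℝ)
    (hord : ∀ i ∈ Finset.Icc 1 N, ∀ j ∈ Finset.Icc 1 N, i ≤ j → ξ0 j ≤ ξ0 i)
    (hbar : 0 < pmean0 N ξ0)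
    (tl : ℕ → ℝ) (htl1 : tl 1 = 0)
    (htl : ∀ l : ℕ, 2 ≤ l → l ≤ N → tl l =
      ((N : ℝ) / ((N : ℝ) - 1)) *
        Real.log (((l : ℝ) - 1) * (((N : ℝ) - 1) / (N : ℝ)) *
          ((pmean0 (l - 1) ξ0 - ξ0 l) / pmean0 N ξ0) + 1)) :
    (∀ l ∈ Finset.Icc 1 (N - 1), tl l ≤ T → T < tl (l + 1) →
      ∀ α ξ, IsFullStrength N T α → IsTrajectory N T α ξ0 ξ →
        (∀ i ∈ Finset.Icc 1 l, ξ T i = pmean l ξ T) →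
        (∀ᵐ t ∂volume, t ∈ Set.Icc (0 : ℝ) T → ∑ i ∈ Finset.Icc 1 l, α t i = 1) →
        (∀ᵐ t ∂volume, t ∈ Set.Icc (0 : ℝ) T → ∀ i ∈ Finset.Icc (l + 1) N, α t i = 0) →
        ∀ β η, IsFullStrength N T β → IsTrajectory N T β ξ0 η →
          migV N ξ T ≤ migV N η T) ∧
    (tl N ≤ T →
      ∀ α ξ, IsFullStrength N T α → IsTrajectory N T α ξ0 ξ →
        (∀ i ∈ Finset.Icc 1 N, ξ T i = xbar N ξ T) →
        ∀ β η, IsFullStrength N T β → IsTrajectory N T β ξ0 η →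
          migV N ξ T ≤ migV N η T) :=
  full_control_strategy_final_cost_general N hN T hT ξ0 hord hbar tl htl
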